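/- Let 𝒜 be a C*-algebra. If every completely positive power bounded ℝ-linear operator on 𝒜_sa with spectral radius 1 has cyclic peripheral spectrum, then every bounded ℝ-linear operator L on 𝒜_sa such that sup_{t ∈ ℝ} ‖exp(tL)‖ < ∞ and exp(tL) is completely positive for every t ∈ ℝ satisfies exp(tL) = id for all t ∈ ℝ. -/

import Mathlib

open scoped ENNReal

variable {A : Type*} [NonUnitalCStarAlgebra A] [PartialOrder A] [StarOrderedRing A]

noncomputable instance : NormedSpace ℝ (selfAdjoint A) where
  norm_smul_le r x := norm_smul_le r (x : A)

instance : CompleteSpace (selfAdjoint A) :=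
  (isClosed_eq continuous_star continuous_id).completeSpace_coe

instance : IsTopologicalRing (selfAdjoint A →L[ℝ] selfAdjoint A) :=
  @NonUnitalSeminormedRing.toIsTopologicalRing _
    ContinuousLinearMap.toNormedRing.toNonUnitalNormedRing.toNonUnitalSeminormedRing

/-- A bounded real-linear operator on the self-adjoint part of a C*-algebra is *positive*
if it maps the positive cone into itself. -/
def IsPositiveOp (L : selfAdjoint A →L[ℝ] selfAdjoint A) : Prop :=
  ∀ x : selfAdjoint A, 0 ≤ x → 0 ≤ L x

/-- `L` is *quasi-positive* if `L + α • id` is positive for some `α ≥ 0`. -/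
def IsQuasiPositiveOp (L : selfAdjoint A →L[ℝ] selfAdjoint A) : Prop :=
  ∃ α : ℝ, 0 ≤ α ∧ IsPositiveOp (L + α • ContinuousLinearMap.id ℝ (selfAdjoint A))

/-- `L` is *exponentially positive* if `exp (t • L)` is positive for all `t ≥ 0`. -/
def IsExpPositiveOp (L : selfAdjoint A →L[ℝ] selfAdjoint A) : Prop :=
  ∀ t : ℝ, 0 ≤ t → IsPositiveOp (NormedSpace.exp (t • L))

/-- `L` is *cross positive* if `φ (L x) ≥ 0` whenever `x ≥ 0` and `φ` is a positive bounded
functional with `φ x = 0`. -/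
def IsCrossPositiveOp (L : selfAdjoint A →L[ℝ] selfAdjoint A) : Prop :=
  ∀ (x : selfAdjoint A) (φ : selfAdjoint A →L[ℝ] ℝ), 0 ≤ x →
    (∀ y : selfAdjoint A, 0 ≤ y → 0 ≤ φ y) → φ x = 0 → 0 ≤ φ (L x)

/-- An element of the C*-algebra of `k × k` matrices over `A` is positive if and only if it is
of the form `star x * x`. -/
def MatrixIsPositive {k : ℕ} (m : Matrix (Fin k) (Fin k) A) : Prop :=
  ∃ x : Matrix (Fin k) (Fin k) A, m = star x * x

/-- A bounded complex-linear operator `T` on `A` is *completely positive* if, for every `k`,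
applying `T` entrywise to `k × k` matrices over `A` maps positive matrices to positive
matrices. -/
def IsCompletelyPositiveC (T : A →L[ℂ] A) : Prop :=
  ∀ (k : ℕ) (m : Matrix (Fin k) (Fin k) A), MatrixIsPositive m → MatrixIsPositive (m.map T)

/-- `T : A →L[ℂ] A` extends the operator `L` on the self-adjoint part of `A`.  (Such an
extension is unique since `A = A_sa ⊕ i A_sa`.) -/
def ExtendsOp (L : selfAdjoint A →L[ℝ] selfAdjoint A) (T : A →L[ℂ] A) : Prop :=
  ∀ x : selfAdjoint A, T x = L x

/-- A bounded real-linear operator on the self-adjoint part of `A` is *completely positive*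
if its (unique) bounded complex-linear extension to `A` is completely positive. -/
def IsCompletelyPositiveOp (L : selfAdjoint A →L[ℝ] selfAdjoint A) : Prop :=
  ∃ T : A →L[ℂ] A, ExtendsOp L T ∧ IsCompletelyPositiveC T

/-- `L` is *power bounded* if `sup_n ‖L ^ n‖ < ∞`. -/
def PowerBounded (L : selfAdjoint A →L[ℝ] selfAdjoint A) : Prop :=
  ∃ C : ℝ, ∀ n : ℕ, ‖L ^ n‖ ≤ C

/-- A subset `S ⊆ ℂ` is *cyclic* if `r * exp (i θ) ∈ S` (with `r ≥ 0`, `θ ∈ ℝ`) implies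
`r * exp (i n θ) ∈ S` for every integer `n`. -/
def IsCyclicSet (S : Set ℂ) : Prop :=
  ∀ (r θ : ℝ), 0 ≤ r → (r : ℂ) * Complex.exp ((θ : ℂ) * Complex.I) ∈ S →
    ∀ n : ℤ, (r : ℂ) * Complex.exp ((n : ℂ) * (θ : ℂ) * Complex.I) ∈ S

/-!
Complexify `L` to `N : A →L[ℂ] A`; then `exp (t • N)` extends `exp (t • L)`, so it is completely
positive and uniformly bounded in `t`, and its spectrum lies in the closed unit disc. A point
`z ∈ σ(N)` must be `z = iα` with `α` real. If `α ≠ 0`, take `t = π / (α k)`: then `exp (iπ / k)`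
lies in the peripheral spectrum of `exp (t • N)`, so by cyclicity `-1 = exp (iπ / k) ^ k` lies in
its spectrum, which is impossible once `k` is so large that `‖exp (t • N) - 1‖ < 2`. Hence `N` is
quasinilpotent, so `‖exp (w • N)‖ = O(exp (ε ‖w‖))` for every `ε > 0`; the Phragmén–Lindelöf
principle then spreads the bound on the real axis to all of `ℂ`, and Liouville's theorem forces
`N = 0`.
-/

open NormedSpace Filter Topology
open Complex (I)
open scoped Real ComplexStarModule

theorem IsCyclicSet.pow_mem {S : Set ℂ} (hS : IsCyclicSet S) {μ : ℂ} (hμ : ‖μ‖ = 1) (h : μ ∈ S)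
    (n : ℕ) : μ ^ n ∈ S := by
  have hexp : Complex.exp (μ.arg * I) = μ := by
    simpa [hμ] using Complex.norm_mul_exp_arg_mul_I μ
  have := hS 1 μ.arg zero_le_one (by simpa [hexp] using h) n
  rwa [Complex.ofReal_one, one_mul, Int.cast_natCast, mul_assoc, Complex.exp_nat_mul, hexp] at this

theorem norm_le_one_of_mem_spectrum_of_norm_pow_le {𝕜 E : Type*} [NormedField 𝕜] [NormedRing E]
    [NormedAlgebra 𝕜 E] [CompleteSpace E] [NormOneClass E] {a : E} {C : ℝ}
    (ha : ∀ n : ℕ, ‖a ^ n‖ ≤ C) {μ : 𝕜} (hμ : μ ∈ spectrum 𝕜 a) : ‖μ‖ ≤ 1 := by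
  by_contra! h
  obtain ⟨n, hn⟩ := pow_unbounded_of_one_lt C h
  have hμn := spectrum.norm_le_norm_of_mem (spectrum.pow_image_subset a n ⟨μ, hμ, rfl⟩)
  rw [norm_pow] at hμn
  exact (hμn.trans (ha n)).not_gt hn

theorem exp_smul_pow {𝕂 F : Type*} [RCLike 𝕂] [NormedRing F] [NormedAlgebra 𝕂 F] [CompleteSpace F]
    (x : F) (t : 𝕂) (n : ℕ) : exp (t • x) ^ n = exp ((n * t) • x) := by
  let _ : NormedAlgebra ℚ F := .restrictScalars ℚ 𝕂 F
  rw [mul_smul, Nat.cast_smul_eq_nsmul, NormedSpace.exp_nsmul]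

section BanachAlgebra

variable {E : Type*} [NormedRing E] [NormedAlgebra ℂ E]

def peripheralSpectrum (a : E) : Set ℂ :=
  {μ : ℂ | μ ∈ spectrum ℂ a ∧ (‖μ‖₊ : ℝ≥0∞) = spectralRadius ℂ a}

theorem norm_exp_smul_le_of_norm_pow_le {N : E} {D ε : ℝ} (hN : ∀ n : ℕ, ‖N ^ n‖ ≤ D * ε ^ n)
    (w : ℂ) : ‖exp (w • N)‖ ≤ D * Real.exp (ε * ‖w‖) := by
  rw [exp_eq_tsum ℂ, Real.exp_eq_exp_ℝ]
  refine tsum_of_norm_bounded ((expSeries_div_hasSum_exp (ε * ‖w‖)).mul_left D) fun n => ?_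
  rw [smul_pow, norm_smul, norm_smul, norm_inv, Complex.norm_natCast, norm_pow, mul_pow]
  calc _ ≤ (n.factorial : ℝ)⁻¹ * (‖w‖ ^ n * (D * ε ^ n)) := by gcongr; exact hN n
    _ = _ := by ring

variable [CompleteSpace E]

theorem exists_norm_pow_le_of_spectrum_subset_zero {N : E} (hN : spectrum ℂ N ⊆ {0})
    {ε : ℝ} (hε : 0 < ε) : ∃ D, ∀ n : ℕ, ‖N ^ n‖ ≤ D * ε ^ n := by
  have hρ : spectralRadius ℂ N = 0 :=
    le_antisymm (iSup₂_le fun k hk => by simp [Set.mem_singleton_iff.1 (hN hk)]) zero_le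
  have hlim := spectrum.pow_norm_pow_one_div_tendsto_nhds_spectralRadius N
  rw [hρ] at hlim
  have hev : ∀ᶠ n : ℕ in atTop, ‖N ^ n‖ / ε ^ n ≤ 1 := by
    filter_upwards [hlim.eventually (gt_mem_nhds (ENNReal.ofReal_pos.2 hε)),
      eventually_gt_atTop 0] with n hn hn0
    rw [ENNReal.ofReal_lt_ofReal_iff hε, one_div, Real.rpow_inv_lt_iff_of_pos (norm_nonneg _)
      hε.le (by positivity), Real.rpow_natCast] at hn
    exact (div_le_one (by positivity)).2 hn.le
  obtain ⟨D, hD⟩ := IsBoundedUnder.bddAbove_range_of_cofinite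
    (Nat.cofinite_eq_atTop ▸ isBoundedUnder_of_eventually_le hev)
  exact ⟨D, fun n => (div_le_iff₀ (by positivity)).1 (hD ⟨n, rfl⟩)⟩

theorem differentiable_exp_smul (N : E) : Differentiable ℂ fun w : ℂ => exp (w • N) :=
  fun w => (hasDerivAt_exp_smul_const N w).differentiableAt

theorem norm_exp_I_mul_smul_le_of_re_nonneg {N : E} (hN : spectrum ℂ N ⊆ {0}) {C : ℝ}
    (hC : ∀ t : ℝ, ‖exp ((t : ℂ) • N)‖ ≤ C) {ε : ℝ} (hε : 0 < ε) {z : ℂ} (hz : 0 ≤ z.re) :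
    ‖exp ((I * z) • N)‖ ≤ C * Real.exp (ε * z.re) := by
  obtain ⟨D₁, hD₁⟩ := exists_norm_pow_le_of_spectrum_subset_zero hN one_pos
  obtain ⟨D, hD⟩ := exists_norm_pow_le_of_spectrum_subset_zero hN hε
  -- The damping factor makes `G` bounded on the positive real axis, where `exp ((I * x) • N)`
  -- grows slower than any exponential.
  set G : ℂ → E := fun u => Complex.exp (-ε * u) • exp ((I * u) • N)
  have hG : ∀ u, ‖G u‖ = Real.exp (-ε * u.re) * ‖exp ((I * u) • N)‖ := fun u => by
    simp [G, norm_smul, Complex.norm_exp]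
  have hGd : Differentiable ℂ G :=
    (Complex.differentiable_exp.comp (differentiable_id.const_mul _)).smul
      ((differentiable_exp_smul N).comp (differentiable_id.const_mul _))
  have hGz : ‖G z‖ ≤ C := by
    refine PhragmenLindelof.right_half_plane_of_bounded_on_real hGd.diffContOnCl
      ⟨1, one_lt_two, 1, ?_⟩ ?_ (fun x => ?_) hz
    · refine Asymptotics.IsBigO.of_bound D₁ (eventually_inf_principal.2 (.of_forall fun u hu => ?_))
      have hu : 0 < u.re := hu
      rw [hG, Real.norm_of_nonneg (Real.exp_pos _).le, Real.rpow_one, one_mul]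
      calc _ ≤ 1 * (D₁ * Real.exp (1 * ‖I * u‖)) :=
            mul_le_mul (Real.exp_le_one_iff.2 (by nlinarith))
              (norm_exp_smul_le_of_norm_pow_le hD₁ _) (norm_nonneg _) zero_le_one
        _ = D₁ * Real.exp ‖u‖ := by simp
    · refine isBoundedUnder_of_eventually_le (a := D) (eventually_ge_atTop 0 |>.mono fun x hx => ?_)
      rw [hG, Complex.ofReal_re]
      calc _ ≤ Real.exp (-ε * x) * (D * Real.exp (ε * ‖I * x‖)) := by
            gcongr; exact norm_exp_smul_le_of_norm_pow_le hD _
        _ = D := by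
            rw [norm_mul, Complex.norm_I, one_mul, Complex.norm_real, Real.norm_of_nonneg hx,
              mul_left_comm, ← Real.exp_add]
            simp
    · have hIx : I * (x * I) = ((-x : ℝ) : ℂ) := by
        push_cast; ring_nf; rw [Complex.I_sq]; ring
      rw [hG, hIx]
      simpa using hC (-x)
  rw [hG, ← le_div_iff₀' (Real.exp_pos _), div_eq_mul_inv, ← Real.exp_neg] at hGz
  simpa using hGz

theorem norm_exp_smul_le_of_im_nonneg {N : E} (hN : spectrum ℂ N ⊆ {0}) {C : ℝ}
    (hC : ∀ t : ℝ, ‖exp ((t : ℂ) • N)‖ ≤ C) {w : ℂ} (hw : 0 ≤ w.im) : ‖exp (w • N)‖ ≤ C := by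
  have hre : (-I * w).re = w.im := by simp
  have hIw : I * (-I * w) = w := by ring_nf; simp [Complex.I_sq]
  have hε : ∀ ε > 0, ‖exp (w • N)‖ ≤ C * Real.exp (ε * w.im) := fun ε hε => by
    have := norm_exp_I_mul_smul_le_of_re_nonneg hN hC hε (z := -I * w) (by rwa [hre])
    rwa [hIw, hre] at this
  have hlim : Tendsto (fun ε => C * Real.exp (ε * w.im)) (𝓝[>] 0) (𝓝 C) :=
    ((by fun_prop : Continuous fun ε => C * Real.exp (ε * w.im)).tendsto' 0 C (by simp)).mono_left
      nhdsWithin_le_nhds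
  exact ge_of_tendsto hlim (eventually_nhdsWithin_of_forall hε)

theorem eq_zero_of_spectrum_subset_zero_of_norm_exp_le {N : E} (hN : spectrum ℂ N ⊆ {0}) {C : ℝ}
    (hC : ∀ t : ℝ, ‖exp ((t : ℂ) • N)‖ ≤ C) : N = 0 := by
  have hN' : spectrum ℂ (-N) ⊆ {0} := by
    rw [← spectrum.neg_eq]
    intro z hz
    simpa using hN hz
  have hbdd : ∀ w : ℂ, ‖exp (w • N)‖ ≤ C := by
    intro w
    rcases le_total 0 w.im with hw | hw
    · exact norm_exp_smul_le_of_im_nonneg hN hC hw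
    · simpa using norm_exp_smul_le_of_im_nonneg hN' (fun t => by simpa using hC (-t))
        (w := -w) (by simpa using hw)
  have hconst := (differentiable_exp_smul N).apply_eq_apply_of_bounded
    (isBounded_iff_forall_norm_le.2 ⟨C, Set.forall_mem_range.2 hbdd⟩)
  have hderiv := hasDerivAt_exp_smul_const N (0 : ℂ)
  rw [funext fun u => hconst u 0] at hderiv
  simpa using hderiv.unique (hasDerivAt_const _ _)

theorem spectralRadius_eq_one_of_norm_pow_le [NormOneClass E] {a : E} {C : ℝ}
    (ha : ∀ n : ℕ, ‖a ^ n‖ ≤ C) {μ : ℂ} (hμ : μ ∈ spectrum ℂ a) (h1 : ‖μ‖ = 1) :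
    spectralRadius ℂ a = 1 := by
  have h1' : (‖μ‖₊ : ℝ≥0∞) = 1 := by simp [← NNReal.coe_eq_one, h1]
  refine le_antisymm (iSup₂_le fun ν hν => ?_) (h1' ▸ le_iSup₂ (f := fun ν _ => (‖ν‖₊ : ℝ≥0∞)) μ hμ)
  exact ENNReal.coe_le_one_iff.2 (norm_le_one_of_mem_spectrum_of_norm_pow_le ha hν)

theorem norm_sub_one_le_of_mem_spectrum [NormOneClass E] {a : E} {μ : ℂ}
    (hμ : μ ∈ spectrum ℂ a) : ‖μ - 1‖ ≤ ‖a - 1‖ := by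
  have h : μ - 1 ∈ spectrum ℂ (a - algebraMap ℂ E 1) :=
    spectrum.sub_singleton_eq a (1 : ℂ) ▸ Set.sub_mem_sub hμ rfl
  rw [map_one] at h
  exact spectrum.norm_le_norm_of_mem h

theorem exp_mul_mem_spectrum_exp_smul {N : E} {z : ℂ} (hz : z ∈ spectrum ℂ N)
    (c : ℂ) : Complex.exp (c * z) ∈ spectrum ℂ (exp (c • N)) := by
  have : Nontrivial E := not_subsingleton_iff_nontrivial.1 fun _ => by
    simp [spectrum.of_subsingleton] at hz
  have hcz : c * z ∈ spectrum ℂ (c • N) := by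
    rw [spectrum.smul_eq_smul c N ⟨z, hz⟩]
    exact Set.smul_mem_smul_set hz
  rw [Complex.exp_eq_exp_ℂ]
  exact spectrum.exp_mem_exp _ hcz

theorem norm_exp_smul_pow_le {N : E} {C : ℝ} (hC : ∀ t : ℝ, ‖exp ((t : ℂ) • N)‖ ≤ C) (t : ℝ)
    (n : ℕ) : ‖exp ((t : ℂ) • N) ^ n‖ ≤ C := by
  rw [exp_smul_pow]
  exact_mod_cast hC (n * t)

theorem re_eq_zero_of_mem_spectrum_of_norm_exp_le [NormOneClass E] {N : E} {C : ℝ}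
    (hC : ∀ t : ℝ, ‖exp ((t : ℂ) • N)‖ ≤ C) {z : ℂ} (hz : z ∈ spectrum ℂ N) : z.re = 0 := by
  have h := fun t : ℝ => norm_le_one_of_mem_spectrum_of_norm_pow_le (norm_exp_smul_pow_le hC t)
    (exp_mul_mem_spectrum_exp_smul hz t)
  have h₁ := h 1
  have h₂ := h (-1)
  simp only [Complex.norm_exp, Real.exp_le_one_iff, Complex.ofReal_one, Complex.ofReal_neg, one_mul,
    neg_mul, Complex.neg_re, neg_nonpos] at h₁ h₂
  exact le_antisymm h₁ h₂

theorem spectrum_subset_zero_of_isCyclicSet_peripheralSpectrum [NormOneClass E] {N : E} {C : ℝ}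
    (hC : ∀ t : ℝ, ‖exp ((t : ℂ) • N)‖ ≤ C)
    (hcyc : ∀ t : ℝ, spectralRadius ℂ (exp ((t : ℂ) • N)) = 1 →
      IsCyclicSet (peripheralSpectrum (exp ((t : ℂ) • N)))) :
    spectrum ℂ N ⊆ {0} := by
  intro z hz
  rw [Set.mem_singleton_iff]
  by_contra hz0
  have hzI : z = z.im * I := by
    apply Complex.ext <;> simp [re_eq_zero_of_mem_spectrum_of_norm_exp_le hC hz]
  have him : z.im ≠ 0 := fun h => hz0 (by rw [hzI, h]; simp)
  have hlim : Tendsto (fun k : ℕ => exp (((π / z.im / k : ℝ) : ℂ) • N)) atTop (𝓝 1) := by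
    simpa only [Function.comp_def, Complex.ofReal_zero, zero_smul, exp_zero] using
      ((differentiable_exp_smul N).continuous.comp Complex.continuous_ofReal).tendsto 0
        |>.comp (tendsto_const_div_atTop_nhds_zero_nat (π / z.im))
  obtain ⟨k, hk, hk0⟩ :=
    ((hlim.eventually (Metric.ball_mem_nhds 1 two_pos)).and (eventually_ne_atTop 0)).exists
  set t : ℝ := π / z.im / k
  set μ : ℂ := Complex.exp ((π / k : ℝ) * I)
  have hμ : μ ∈ spectrum ℂ (exp ((t : ℂ) • N)) := by
    convert exp_mul_mem_spectrum_exp_smul hz t using 2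
    rw [hzI, ← mul_assoc, ← Complex.ofReal_mul]
    congr 2
    simp only [t]
    field_simp
  have hμ1 : ‖μ‖ = 1 := Complex.norm_exp_ofReal_mul_I _
  have hr := spectralRadius_eq_one_of_norm_pow_le (norm_exp_smul_pow_le hC t) hμ hμ1
  have hper : μ ∈ peripheralSpectrum (exp ((t : ℂ) • N)) :=
    ⟨hμ, by rw [hr]; simp [← NNReal.coe_eq_one, hμ1]⟩
  have hneg : (-1 : ℂ) ∈ spectrum ℂ (exp ((t : ℂ) • N)) := by
    have := ((hcyc t hr).pow_mem hμ1 hper k).1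
    rwa [← Complex.exp_nat_mul, ← mul_assoc, ← Complex.ofReal_natCast, ← Complex.ofReal_mul,
      mul_div_cancel₀ _ (Nat.cast_ne_zero.2 hk0), Complex.exp_pi_mul_I] at this
  have h2 := (norm_sub_one_le_of_mem_spectrum hneg).trans_lt (dist_eq_norm (exp ((t : ℂ) • N)) 1 ▸ hk)
  norm_num at h2

end BanachAlgebra

section Complexification

variable {B : Type*} [NonUnitalCStarAlgebra B]

noncomputable def complexification (L : selfAdjoint B →L[ℝ] selfAdjoint B) : B →L[ℂ] B :=
  LinearMap.mkContinuous
    { toFun := fun a => (L (ℜ a) : B) + I • (L (ℑ a) : B)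
      map_add' := fun a b => by
        simp only [map_add, AddSubgroup.coe_add, smul_add]
        abel
      map_smul' := fun z a => by
        simp only [realPart_smul, imaginaryPart_smul, map_sub, map_add, map_smul,
          AddSubgroupClass.coe_sub, AddSubgroup.coe_add, selfAdjoint.val_smul, RingHom.id_apply,
          ← Complex.coe_smul]
        conv_rhs => rw [← Complex.re_add_im z]
        linear_combination (norm := module) (-(z.im : ℂ) * Complex.I_sq) • (L (ℑ a) : B) }
    (2 * ‖L‖) fun a => calc
      ‖(L (ℜ a) : B) + I • (L (ℑ a) : B)‖ ≤ ‖L (ℜ a)‖ + ‖L (ℑ a)‖ := by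
        simpa [norm_smul] using norm_add_le (L (ℜ a) : B) (I • (L (ℑ a) : B))
      _ ≤ ‖L‖ * ‖a‖ + ‖L‖ * ‖a‖ := by
        gcongr
        · exact L.le_opNorm_of_le (realPart.norm_le a)
        · exact L.le_opNorm_of_le (imaginaryPart.norm_le a)
      _ = 2 * ‖L‖ * ‖a‖ := by ring

theorem complexification_apply (L : selfAdjoint B →L[ℝ] selfAdjoint B) (a : B) :
    complexification L a = (L (ℜ a) : B) + I • (L (ℑ a) : B) :=
  rfl

theorem extendsOp_complexification (L : selfAdjoint B →L[ℝ] selfAdjoint B) :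
    ExtendsOp L (complexification L) := fun x => by
  simp [complexification_apply, selfAdjoint.realPart_coe, selfAdjoint.imaginaryPart_coe]

namespace ExtendsOp

variable {L M : selfAdjoint B →L[ℝ] selfAdjoint B} {T S : B →L[ℂ] B}

theorem eq_complexification (h : ExtendsOp L T) : T = complexification L := by
  ext a
  conv_lhs => rw [← realPart_add_I_smul_imaginaryPart a]
  rw [map_add, map_smul, h, h, complexification_apply]

theorem unique (h₁ : ExtendsOp L T) (h₂ : ExtendsOp L S) : T = S :=
  h₁.eq_complexification.trans h₂.eq_complexification.symm

theorem unique_left (h₁ : ExtendsOp L T) (h₂ : ExtendsOp M T) : L = M :=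
  ContinuousLinearMap.ext fun x => Subtype.ext ((h₁ x).symm.trans (h₂ x))

theorem norm_le (h : ExtendsOp L T) : ‖T‖ ≤ 2 * ‖L‖ :=
  h.eq_complexification ▸ LinearMap.mkContinuous_norm_le _ (by positivity : (0 : ℝ) ≤ 2 * ‖L‖) _

theorem smul (h : ExtendsOp L T) (t : ℝ) : ExtendsOp (t • L) ((t : ℂ) • T) := fun x => by
  simp [h x, Complex.coe_smul]

theorem add (h₁ : ExtendsOp L T) (h₂ : ExtendsOp M S) : ExtendsOp (L + M) (T + S) := fun x => by
  simp [h₁ x, h₂ x]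

theorem mul (h₁ : ExtendsOp L T) (h₂ : ExtendsOp M S) : ExtendsOp (L * M) (T * S) := fun x => by
  simp [h₁ _, h₂ x]

end ExtendsOp

theorem extendsOp_one : ExtendsOp (1 : selfAdjoint B →L[ℝ] selfAdjoint B) 1 := fun _ => rfl

theorem extendsOp_zero : ExtendsOp (0 : selfAdjoint B →L[ℝ] selfAdjoint B) 0 := fun _ => rfl

noncomputable def complexificationHom : (selfAdjoint B →L[ℝ] selfAdjoint B) →+* (B →L[ℂ] B) where
  toFun := complexification
  map_one' := extendsOp_one.eq_complexification.symm
  map_mul' L M :=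
    ((extendsOp_complexification L).mul (extendsOp_complexification M)).eq_complexification.symm
  map_zero' := extendsOp_zero.eq_complexification.symm
  map_add' L M :=
    ((extendsOp_complexification L).add (extendsOp_complexification M)).eq_complexification.symm

theorem continuous_complexificationHom : Continuous (complexificationHom (B := B)) :=
  AddMonoidHomClass.continuous_of_bound (complexificationHom (B := B)) 2 fun L =>
    (extendsOp_complexification L).norm_le

theorem ExtendsOp.exp {L : selfAdjoint B →L[ℝ] selfAdjoint B} {T : B →L[ℂ] B}
    (h : ExtendsOp L T) : ExtendsOp (NormedSpace.exp L) (NormedSpace.exp T) := by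
  rw [h.eq_complexification]
  have := map_exp_of_mem_ball (𝕂 := ℝ) complexificationHom continuous_complexificationHom L
    (by simp [expSeries_radius_eq_top])
  exact this ▸ extendsOp_complexification (NormedSpace.exp L)

end Complexification

/-- If every completely positive power bounded real-linear operator on the self-adjoint part
of a C*-algebra `A` with spectral radius `1` has cyclic peripheral spectrum, then every
bounded, completely positive one-parameter group `(exp (t • L))_{t ∈ ℝ}` on the self-adjoint
part of `A` is trivial. -/
theorem bounded_completelyPositive_group_trivial_of_cyclic_peripheralSpectrum
    (hcyc : ∀ (L : selfAdjoint A →L[ℝ] selfAdjoint A) (T : A →L[ℂ] A), ExtendsOp L T →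
      IsCompletelyPositiveC T → PowerBounded L → spectralRadius ℂ T = 1 →
      IsCyclicSet {μ : ℂ | μ ∈ spectrum ℂ T ∧ (‖μ‖₊ : ℝ≥0∞) = spectralRadius ℂ T}) :
    ∀ L : selfAdjoint A →L[ℝ] selfAdjoint A,
      (∃ C : ℝ, ∀ t : ℝ, ‖NormedSpace.exp (t • L)‖ ≤ C) →
      (∀ t : ℝ, IsCompletelyPositiveOp (NormedSpace.exp (t • L))) →
      ∀ t : ℝ, NormedSpace.exp (t • L) = ContinuousLinearMap.id ℝ (selfAdjoint A) := by
  intro L ⟨C, hC⟩ hcp t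
  rcases subsingleton_or_nontrivial A with _ | _
  · ext x
    exact Subsingleton.elim _ _
  obtain ⟨N, hLN⟩ : ∃ N, ExtendsOp L N := ⟨_, extendsOp_complexification L⟩
  have hext : ∀ s : ℝ, ExtendsOp (exp (s • L)) (exp ((s : ℂ) • N)) := fun s => (hLN.smul s).exp
  have hbound : ∀ s : ℝ, ‖exp ((s : ℂ) • N)‖ ≤ 2 * C := fun s =>
    (hext s).norm_le.trans (by linarith [hC s])
  have hper : ∀ s : ℝ, spectralRadius ℂ (exp ((s : ℂ) • N)) = 1 →
      IsCyclicSet (peripheralSpectrum (exp ((s : ℂ) • N))) := by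
    intro s hs
    obtain ⟨T, hT, hTcp⟩ := hcp s
    exact hcyc _ _ (hext s) (hT.unique (hext s) ▸ hTcp) ⟨C, fun n => exp_smul_pow L s n ▸ hC _⟩ hs
  have hN : N = 0 := eq_zero_of_spectrum_subset_zero_of_norm_exp_le
    (spectrum_subset_zero_of_isCyclicSet_peripheralSpectrum hbound hper) hbound
  have hL : L = 0 := (hN ▸ hLN).unique_left extendsOp_zero
  have htL : t • L = 0 := by
    ext x
    simp [hL]
  rw [htL, NormedSpace.exp_zero]
  rfl
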